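/- arXiv:2310.06354 — 2 statements merged into one kernel-verified Lean document; each statement's English description precedes it below -/
import Mathlib

section
/- Let Δ ≥ 2 and let V be a vertex set with |V| = n, where Δ + 1 ≤ n ≤ 2Δ - 2. Then there exists a collection 𝒮 (with repetition allowed) of copies of the star K_{1,Δ} on V with |𝒮| = ⌊(n-1)²/4⌋ such that 𝒮 is rainbow K_{1,Δ}-free. -/
/-!
Split the `n` vertices into `k = ⌊n/2⌋` hubs arranged in a cycle and `m + 1 = ⌈n/2⌉` other
vertices, where `m = ⌊(n-1)/2⌋`, so that `k * m = ⌊(n-1)²/4⌋`. Take `m` copies of the star at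
each hub `c` whose leaves are all non-hubs and the `d = Δ - 1 - m < k` hubs following `c`.
In a rainbow star at `u`, every edge `ul` is covered either by a star centered at `u` (distinct
ones for distinct leaves) or by a star centered at `l` having `u` as a leaf. At a hub this gives
at most `m + d = Δ - 1` edges, at a non-hub only the second kind occurs and gives at most
`k ≤ Δ - 1` edges.
-/

/-- A copy of the star K_{1,Δ} on the vertex set `V`: a center together with
a set of `Δ` leaves not containing the center. -/
structure StarGraph (V : Type) (Δ : ℕ) where
  center : V
  leaves : Finset V
  card_leaves : leaves.card = Δ
  center_not_mem : center ∉ leaves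

/-- `x` and `y` are adjacent in the star `S`. -/
def StarGraph.Adj {V : Type} {Δ : ℕ} (S : StarGraph V Δ) (x y : V) : Prop :=
  (x = S.center ∧ y ∈ S.leaves) ∨ (y = S.center ∧ x ∈ S.leaves)

/-- The collection `S` has a rainbow star with center `u` and leaf set `L`:
there is an injective (on `L`) assignment of the leaves to members of the
collection such that each edge from `u` to a leaf lies in the assigned star. -/
def IsRainbowStarAt {V : Type} {Δ t : ℕ} (S : Fin t → StarGraph V Δ) (u : V) (L : Finset V) : Prop :=
  u ∉ L ∧ ∃ g : V → Fin t, Set.InjOn g ↑L ∧ ∀ l ∈ L, (S (g l)).Adj u l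

/-- The collection `S` contains a rainbow `K_{1,Δ}`. -/
def HasRainbowStar {V : Type} {Δ t : ℕ} (S : Fin t → StarGraph V Δ) : Prop :=
  ∃ (u : V) (L : Finset V), L.card = Δ ∧ IsRainbowStarAt S u L

open Finset

namespace StarGraph

variable {V W : Type} {Δ : ℕ}

def map (S : StarGraph V Δ) (e : V ≃ W) : StarGraph W Δ where
  center := e S.center
  leaves := S.leaves.map e.toEmbedding
  card_leaves := by rw [card_map, S.card_leaves]
  center_not_mem := by simpa using S.center_not_mem

theorem map_adj_iff (S : StarGraph V Δ) (e : V ≃ W) (x y : W) :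
    (S.map e).Adj x y ↔ S.Adj (e.symm x) (e.symm y) := by
  simp only [Adj, map, mem_map_equiv]
  grind

end StarGraph

section Rainbow

variable {V W : Type} {Δ t : ℕ}

theorem HasRainbowStar.of_map {S : Fin t → StarGraph V Δ} (e : V ≃ W)
    (h : HasRainbowStar fun i => (S i).map e) : HasRainbowStar S := by
  obtain ⟨u, L, hcard, huL, g, hg, hadj⟩ := h
  refine ⟨e.symm u, L.map e.symm.toEmbedding, by rw [card_map, hcard], by simpa using huL,
    g ∘ e, ?_, ?_⟩
  · intro x hx y hy hxy
    simpa using hg (by simpa using hx) (by simpa using hy) hxy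
  · intro l hl
    simpa [StarGraph.map_adj_iff] using hadj (e l) (by simpa using hl)

theorem exists_not_hasRainbowStar_of_equiv (e : V ≃ W)
    (h : ∃ S : Fin t → StarGraph W Δ, ¬ HasRainbowStar S) :
    ∃ S : Fin t → StarGraph V Δ, ¬ HasRainbowStar S := by
  obtain ⟨S, hS⟩ := h
  exact ⟨fun i => (S i).map e.symm, fun h => hS (by simpa using h.of_map e.symm)⟩

end Rainbow

section Counting

variable {V : Type} [DecidableEq V] {Δ t : ℕ}

def starsCenteredAt (S : Fin t → StarGraph V Δ) (u : V) : Finset (Fin t) :=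
  univ.filter fun i => (S i).center = u

def centersOfStarsWithLeaf (S : Fin t → StarGraph V Δ) (u : V) : Finset V :=
  (univ.filter fun i => u ∈ (S i).leaves).image fun i => (S i).center

theorem IsRainbowStarAt.card_le {S : Fin t → StarGraph V Δ} {u : V} {L : Finset V}
    (h : IsRainbowStarAt S u L) :
    #L ≤ #(starsCenteredAt S u) + #(centersOfStarsWithLeaf S u) := by
  obtain ⟨-, g, hg, hadj⟩ := h
  have hcentered : #(L.filter fun l => (S (g l)).center = u) ≤ #(starsCenteredAt S u) :=
    card_le_card_of_injOn g (fun l hl => by simp_all [starsCenteredAt])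
      (hg.mono (filter_subset _ L))
  have hother : L.filter (fun l => (S (g l)).center ≠ u) ⊆ centersOfStarsWithLeaf S u := by
    intro l hl
    rw [mem_filter] at hl
    rcases hadj l hl.1 with ⟨hu, -⟩ | ⟨hl', hu⟩
    · exact absurd hu.symm hl.2
    · exact mem_image.2 ⟨g l, by simpa [centersOfStarsWithLeaf] using hu, hl'.symm⟩
  rw [← card_filter_add_card_filter_not (s := L) fun l => (S (g l)).center = u]
  exact add_le_add hcentered (card_le_card hother)

theorem not_hasRainbowStar_of_forall_lt {S : Fin t → StarGraph V Δ}
    (h : ∀ u, #(starsCenteredAt S u) + #(centersOfStarsWithLeaf S u) < Δ) :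
    ¬ HasRainbowStar S := by
  rintro ⟨u, L, hL, hrainbow⟩
  exact (hL ▸ hrainbow.card_le).not_gt (h u)

end Counting

section Circulant

variable {k d : ℕ}

def cyclicSuccessors (d : ℕ) (c : Fin k) : Finset (Fin k) :=
  univ.filter fun x => (x - c).val ∈ Icc 1 d

theorem card_filter_val_mem_Icc_one (hd : d < k) :
    #(univ.filter fun y : Fin k => y.val ∈ Icc 1 d) = d := by
  have himage : (univ.filter fun y : Fin k => y.val ∈ Icc 1 d).map Fin.valEmbedding = Icc 1 d := by
    ext j
    simp only [mem_map, mem_filter, mem_univ, true_and, Fin.valEmbedding_apply]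
    exact ⟨fun ⟨y, hy, hj⟩ => hj ▸ hy, fun hj => ⟨⟨j, by grind⟩, hj, rfl⟩⟩
  rw [← card_map, himage, Nat.card_Icc, Nat.add_sub_cancel]

theorem card_cyclicSuccessors (hd : d < k) (c : Fin k) : #(cyclicSuccessors d c) = d := by
  have : NeZero k := ⟨by omega⟩
  exact (card_equiv (Equiv.subRight c) (by simp [cyclicSuccessors])).trans
    (card_filter_val_mem_Icc_one hd)

theorem card_filter_mem_cyclicSuccessors (hd : d < k) (u : Fin k) :
    #(univ.filter fun c => u ∈ cyclicSuccessors d c) = d := by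
  have : NeZero k := ⟨by omega⟩
  exact (card_equiv (Equiv.subLeft u) (by simp [cyclicSuccessors])).trans
    (card_filter_val_mem_Icc_one hd)

theorem self_notMem_cyclicSuccessors (c : Fin k) : c ∉ cyclicSuccessors d c := by
  have : NeZero k := ⟨c.pos.ne'⟩
  simp [cyclicSuccessors]

end Circulant

section CirculantFamily

variable {k d : ℕ} (m : ℕ) (hd : d < k)

def circulantStar (c : Fin k) : StarGraph (Fin k ⊕ Fin (m + 1)) (d + (m + 1)) where
  center := .inl c
  leaves := (cyclicSuccessors d c).disjSum univ
  card_leaves := by rw [card_disjSum, card_cyclicSuccessors hd, card_univ, Fintype.card_fin]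
  center_not_mem := by simpa using self_notMem_cyclicSuccessors c

def circulantStarFamily : Fin (k * m) → StarGraph (Fin k ⊕ Fin (m + 1)) (d + (m + 1)) :=
  fun i => circulantStar m hd (finProdFinEquiv.symm i).1

theorem card_starsCenteredAt_circulantStarFamily_inl_le (c : Fin k) :
    #(starsCenteredAt (circulantStarFamily m hd) (.inl c)) ≤ m := by
  calc #(starsCenteredAt (circulantStarFamily m hd) (.inl c))
      ≤ #(univ : Finset (Fin m)) := card_le_card_of_injOn (fun i => (finProdFinEquiv.symm i).2)
        (fun _ _ => mem_coe.2 (mem_univ _)) fun i hi j hj hij => by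
          simp only [starsCenteredAt, circulantStarFamily, circulantStar, coe_filter, mem_univ,
            true_and, Set.mem_ofPred_eq, Sum.inl.injEq] at hi hj
          exact finProdFinEquiv.symm.injective (Prod.ext (hi.trans hj.symm) hij)
    _ = m := by simp

theorem starsCenteredAt_circulantStarFamily_inr (x : Fin (m + 1)) :
    starsCenteredAt (circulantStarFamily m hd) (.inr x) = ∅ := by
  simp [starsCenteredAt, circulantStarFamily, circulantStar]

theorem centersOfStarsWithLeaf_circulantStarFamily_subset (u : Fin k ⊕ Fin (m + 1)) :
    centersOfStarsWithLeaf (circulantStarFamily m hd) u ⊆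
      (univ.filter fun c => u ∈ (circulantStar m hd c).leaves).map .inl := by
  intro v hv
  simp only [centersOfStarsWithLeaf, mem_image, mem_filter, mem_univ, true_and] at hv
  obtain ⟨i, hu, rfl⟩ := hv
  exact mem_map_of_mem _ (by simpa [circulantStarFamily] using hu)

theorem card_centersOfStarsWithLeaf_circulantStarFamily_le (u : Fin k ⊕ Fin (m + 1)) :
    #(centersOfStarsWithLeaf (circulantStarFamily m hd) u) ≤ k :=
  (card_le_card (centersOfStarsWithLeaf_circulantStarFamily_subset m hd u)).trans <| by
    simpa using card_filter_le (univ : Finset (Fin k)) _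

theorem card_centersOfStarsWithLeaf_circulantStarFamily_inl_le (c : Fin k) :
    #(centersOfStarsWithLeaf (circulantStarFamily m hd) (.inl c)) ≤ d :=
  (card_le_card (centersOfStarsWithLeaf_circulantStarFamily_subset m hd _)).trans <| by
    simpa [circulantStar] using (card_filter_mem_cyclicSuccessors hd c).le

theorem not_hasRainbowStar_circulantStarFamily (hk : k ≤ d + m) :
    ¬ HasRainbowStar (circulantStarFamily m hd) := by
  refine not_hasRainbowStar_of_forall_lt fun u => ?_
  rcases u with c | x
  · have := card_starsCenteredAt_circulantStarFamily_inl_le m hd c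
    have := card_centersOfStarsWithLeaf_circulantStarFamily_inl_le m hd c
    omega
  · rw [starsCenteredAt_circulantStarFamily_inr, card_empty]
    have := card_centersOfStarsWithLeaf_circulantStarFamily_le m hd (.inr x)
    omega

end CirculantFamily

theorem Nat.sub_one_sq_div_four (n : ℕ) : (n - 1) ^ 2 / 4 = n / 2 * ((n - 1) / 2) := by
  rcases Nat.even_or_odd' (n - 1) with ⟨b, hb | hb⟩
  · have hsq : (n - 1) ^ 2 = 4 * (b * b) := by rw [hb]; ring
    rw [hsq, show n / 2 = b by omega, show (n - 1) / 2 = b by omega]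
    omega
  · have hsq : (n - 1) ^ 2 = 4 * ((b + 1) * b) + 1 := by rw [hb]; ring
    rw [hsq, show n / 2 = b + 1 by omega, show (n - 1) / 2 = b by omega]
    omega

theorem starGraph_extremal_exists_small_n_general {V : Type} [Fintype V]
    (Δ n : ℕ)
    (hcard : Fintype.card V = n)
    (hn₁ : Δ + 1 ≤ n) (hn₂ : n ≤ 2 * Δ - 2) :
    ∃ S : Fin ((n - 1) ^ 2 / 4) → StarGraph V Δ,
      ¬ HasRainbowStar S := by
  set k := n / 2
  set m := (n - 1) / 2
  obtain ⟨d, rfl⟩ : ∃ d, Δ = d + (m + 1) := ⟨Δ - (m + 1), by omega⟩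
  have hd : d < k := by omega
  have e : V ≃ Fin k ⊕ Fin (m + 1) :=
    Fintype.equivOfCardEq (by simp only [Fintype.card_sum, Fintype.card_fin]; omega)
  rw [Nat.sub_one_sq_div_four]
  exact exists_not_hasRainbowStar_of_equiv e
    ⟨circulantStarFamily m hd, not_hasRainbowStar_circulantStarFamily m hd (by omega)⟩

theorem starGraph_extremal_exists_small_n {V : Type} [Fintype V]
    (Δ n : ℕ) (hΔ : 2 ≤ Δ)
    (hcard : Fintype.card V = n)
    (hn₁ : Δ + 1 ≤ n) (hn₂ : n ≤ 2 * Δ - 2) :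
    ∃ S : Fin ((n - 1) ^ 2 / 4) → StarGraph V Δ,
      ¬ HasRainbowStar S :=
  starGraph_extremal_exists_small_n_general Δ n hcard hn₁ hn₂
end

section
/- Let Δ ≥ 2 and let 𝒮 be a collection (with repetition allowed) of copies of the star K_{1,Δ} on a common vertex set V that is rainbow K_{1,Δ}-free. For u ∈ V, let 𝒮_u be the sub-collection of stars of 𝒮 with center u, and let d⁻(u) be the number of vertices x ∈ V with x ≠ u such that u is a leaf of some star in 𝒮_x. Then for every vertex u that is the center of at least one star of 𝒮, we have |𝒮_u| ≤ Δ - 1 - d⁻(u). -/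
/-- The number of stars of the collection `S` with center `u` (this is `|𝒮_u|`). -/
noncomputable def centerCount {V : Type} {Δ t : ℕ} (S : Fin t → StarGraph V Δ) (u : V) : ℕ :=
  {i : Fin t | (S i).center = u}.ncard

/-- The in-degree `d⁻(u)`: the number of vertices `x ≠ u` such that `u` is a leaf of
some star of the collection with center `x`. -/
noncomputable def inDeg {V : Type} {Δ t : ℕ} (S : Fin t → StarGraph V Δ) (u : V) : ℕ :=
  {x : V | x ≠ u ∧ ∃ i, (S i).center = x ∧ u ∈ (S i).leaves}.ncard

/-- The set of vertices that are centers of at least one star of the collection. -/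
def centers {V : Type} {Δ t : ℕ} (S : Fin t → StarGraph V Δ) : Set V :=
  {u : V | ∃ i, (S i).center = u}

/-!
If `|𝒮_u| + d⁻(u) ≥ Δ`, a rainbow star centred at `u` can be assembled. Each in-neighbour `x`
of `u` comes with its own colour (a star centred at `x` having `u` as a leaf) and contributes
the leaf `x`; these colours are distinct because their centres are. The remaining leaves come
from stars centred at `u`: each has `Δ` leaves, so after discarding the in-neighbours already
used it still has enough leaves for Hall's theorem to give them distinct representatives.
-/

open Finset

theorem Finset.exists_injOn_mem_of_card_le {ι α : Type*} [DecidableEq α] [Nonempty α]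
    {A : Finset ι} {T : ι → Finset α} (hT : ∀ i ∈ A, #A ≤ #(T i)) :
    ∃ f : ι → α, Set.InjOn f A ∧ ∀ i ∈ A, f i ∈ T i := by
  classical
  have hall : ∀ s : Finset A, #s ≤ #(s.biUnion fun i => T i) := by
    intro s
    obtain rfl | ⟨i, hi⟩ := s.eq_empty_or_nonempty
    · simp
    calc #s ≤ #A := by simpa using s.card_le_univ
      _ ≤ #(T i) := hT i i.2
      _ ≤ #(s.biUnion fun i => T i) := card_le_card (subset_biUnion_of_mem (fun i : A => T i) hi)
  obtain ⟨f, hfinj, hfT⟩ := (all_card_le_biUnion_card_iff_exists_injective _).mp hall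
  refine ⟨fun i => if hi : i ∈ A then f ⟨i, hi⟩ else Classical.arbitrary α, ?_, ?_⟩
  · intro i hi j hj hij
    have hij' : f ⟨i, hi⟩ = f ⟨j, hj⟩ := by
      simpa [dif_pos (mem_coe.mp hi), dif_pos (mem_coe.mp hj)] using hij
    exact congrArg Subtype.val (hfinj hij')
  · intro i hi
    simpa [dif_pos hi] using hfT ⟨i, hi⟩

variable {V : Type} {Δ t : ℕ}

theorem StarGraph.Adj.ne {S : StarGraph V Δ} {x y : V} (h : S.Adj x y) : x ≠ y := by
  rintro rfl
  rcases h with ⟨rfl, h⟩ | ⟨rfl, h⟩ <;> exact S.center_not_mem h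

section Collection

variable (S : Fin t → StarGraph V Δ) {u : V}

theorem centerCount_eq_card [DecidableEq V] : centerCount S u = #{i | (S i).center = u} := by
  rw [centerCount, ← Set.ncard_coe_finset, coe_filter]
  simp only [mem_univ, true_and]

theorem inDeg_eq_card_image [DecidableEq V] :
    inDeg S u = #(({i | u ∈ (S i).leaves} : Finset (Fin t)).image fun i => (S i).center) := by
  rw [inDeg, ← Set.ncard_coe_finset]
  congr 1
  ext x
  simp only [Set.mem_ofPred_eq, coe_image, coe_filter, mem_univ, true_and, Set.mem_image]
  constructor
  · rintro ⟨-, i, rfl, hi⟩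
    exact ⟨i, hi, rfl⟩
  · rintro ⟨i, hi, rfl⟩
    exact ⟨fun h => (S i).center_not_mem (h ▸ hi), i, rfl, hi⟩

theorem exists_injOn_center_card_eq_inDeg :
    ∃ C : Finset (Fin t), (∀ j ∈ C, u ∈ (S j).leaves) ∧
      Set.InjOn (fun j => (S j).center) C ∧ #C = inDeg S u := by
  classical
  obtain ⟨C, hC, hinj, himage⟩ :=
    exists_subset_injOn_image_eq_of_surjOn (f := fun i => (S i).center) {i | u ∈ (S i).leaves}
      (({i | u ∈ (S i).leaves} : Finset (Fin t)).image fun i => (S i).center) (by intro x; simp)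
  refine ⟨C, fun j hj => hC hj, hinj, ?_⟩
  rw [inDeg_eq_card_image, ← himage, card_image_of_injOn hinj]

theorem isRainbowStarAt_image [DecidableEq V] [Nonempty (Fin t)] {J : Finset (Fin t)}
    {leaf : Fin t → V} (hadj : ∀ j ∈ J, (S j).Adj u (leaf j)) :
    IsRainbowStarAt S u (J.image leaf) := by
  refine ⟨fun hu => ?_, Function.invFunOn leaf J, ?_, ?_⟩
  · obtain ⟨j, hj, hju⟩ := mem_image.mp hu
    exact (hadj j hj).ne hju.symm
  · rw [coe_image]
    exact Function.invFunOn_injOn_image leaf J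
  · intro l hl
    obtain ⟨j, hj, rfl⟩ := mem_image.mp hl
    have hex : ∃ i ∈ (J : Set (Fin t)), leaf i = leaf j := ⟨j, hj, rfl⟩
    have := hadj _ (Function.invFunOn_mem hex)
    rwa [Function.invFunOn_eq hex] at this

theorem hasRainbowStar_of_card_add_card [DecidableEq V] [Nonempty (Fin t)]
    {A C : Finset (Fin t)}
    (hA : ∀ j ∈ A, (S j).center = u) (hC : ∀ j ∈ C, u ∈ (S j).leaves)
    (hCinj : Set.InjOn (fun j => (S j).center) C) (hcard : #A + #C = Δ) :
    HasRainbowStar S := by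
  have : Nonempty V := ⟨u⟩
  set D := C.image fun j => (S j).center
  obtain ⟨f, hfinj, hf⟩ := exists_injOn_mem_of_card_le (A := A) (T := fun j => (S j).leaves \ D)
    fun j _ => by
      have := le_card_sdiff D (S j).leaves
      rw [(S j).card_leaves, card_image_of_injOn hCinj] at this
      omega
  have hCu : ∀ j ∈ C, (S j).center ≠ u := fun j hj h => (S j).center_not_mem (h ▸ hC j hj)
  have hAC : Disjoint A C :=
    disjoint_left.mpr fun j hjA hjC => hCu j hjC (hA j hjA)
  let leaf j := if (S j).center = u then f j else (S j).center
  have hleafA : ∀ j ∈ A, leaf j = f j := fun j hj => if_pos (hA j hj)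
  have hleafC : ∀ j ∈ C, leaf j = (S j).center := fun j hj => if_neg (hCu j hj)
  have hinj : Set.InjOn leaf ↑(A ∪ C) := by
    rw [coe_union, Set.injOn_union (disjoint_coe.mpr hAC)]
    refine ⟨hfinj.congr fun j hj => (hleafA j hj).symm,
      hCinj.congr fun j hj => (hleafC j hj).symm, fun i hi j hj hij => ?_⟩
    rw [hleafA i hi, hleafC j hj] at hij
    exact (mem_sdiff.mp (hf i hi)).2 (hij ▸ mem_image_of_mem _ hj)
  refine ⟨u, (A ∪ C).image leaf, ?_, isRainbowStarAt_image S fun j hj => ?_⟩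
  · rw [card_image_of_injOn hinj, card_union_of_disjoint hAC, hcard]
  · rcases mem_union.mp hj with hj | hj
    · exact Or.inl ⟨(hA j hj).symm, hleafA j hj ▸ (mem_sdiff.mp (hf j hj)).1⟩
    · exact Or.inr ⟨hleafC j hj, hC j hj⟩

theorem hasRainbowStar_of_le_centerCount_add_inDeg [Nonempty (Fin t)]
    (h : Δ ≤ centerCount S u + inDeg S u) : HasRainbowStar S := by
  classical
  obtain ⟨C₀, hC₀u, hC₀inj, hC₀card⟩ := exists_injOn_center_card_eq_inDeg S (u := u)
  obtain ⟨C, hCC₀, hCcard⟩ := exists_subset_card_eq (min_le_left #C₀ Δ)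
  obtain ⟨A, hAu, hAcard⟩ := exists_subset_card_eq (s := {i | (S i).center = u}) (n := Δ - #C)
    (by rw [← centerCount_eq_card S]; omega)
  refine hasRainbowStar_of_card_add_card S (A := A) (C := C)
    (fun j hj => (mem_filter.mp (hAu hj)).2) (fun j hj => hC₀u j (hCC₀ hj))
    (hC₀inj.mono hCC₀) ?_
  omega

end Collection

theorem centerCount_le_of_rainbow_free_general {V : Type}
    (Δ t : ℕ) (S : Fin t → StarGraph V Δ)
    (hfree : ¬ HasRainbowStar S) :
    ∀ u : V, (∃ i, (S i).center = u) →
      (centerCount S u : ℤ) ≤ (Δ : ℤ) - 1 - (inDeg S u : ℤ) := by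
  rintro u ⟨i, -⟩
  have : Nonempty (Fin t) := ⟨i⟩
  have := mt (hasRainbowStar_of_le_centerCount_add_inDeg S (u := u)) hfree
  omega

theorem centerCount_le_of_rainbow_free {V : Type} [Fintype V]
    (Δ t : ℕ) (hΔ : 2 ≤ Δ) (S : Fin t → StarGraph V Δ)
    (hfree : ¬ HasRainbowStar S) :
    ∀ u : V, (∃ i, (S i).center = u) →
      (centerCount S u : ℤ) ≤ (Δ : ℤ) - 1 - (inDeg S u : ℤ) :=
  centerCount_le_of_rainbow_free_general Δ t S hfree
end
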